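/- arXiv:2511.21275 — 3 statements merged into one kernel-verified Lean document; each statement's English description precedes it below -/
import Mathlib

section
/- Let d ≥ 1, let V : ℝ → ℝ be continuous and nonnegative, and assume its zero set Z_V = {y ∈ ℝ : V(y) = 0} consists of isolated points (i.e., Z_V is a discrete subset of ℝ). Let u : ℝ^d → ℝ be a bounded, twice continuously differentiable, real-valued solution of Δu = V(u)·u on ℝ^d. If there exists a sequence (r_j) of positive reals with r_j → +∞ such that ∫_{r_j ≤ |x| ≤ r_j+1} u(x)² dx → 0 as j → +∞, then u ≡ 0 on ℝ^d. -/
open MeasureTheory Filter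


/-- The Laplacian `Δu(x) = ∑ i, ∂²u/∂x_i²(x)` on `ℝ^d`. -/
noncomputable def laplacian {d : ℕ} {F : Type*} [NormedAddCommGroup F] [NormedSpace ℝ F]
    (u : EuclideanSpace ℝ (Fin d) → F) (x : EuclideanSpace ℝ (Fin d)) : F :=
  ∑ i : Fin d, fderiv ℝ (fun y => fderiv ℝ u y (EuclideanSpace.single i (1 : ℝ))) x
    (EuclideanSpace.single i (1 : ℝ))

section LiouvilleAux
open Real


-- Step 1: smoothTransition is Lipschitz
lemma st_lip : ∃ K : NNReal, LipschitzWith K Real.smoothTransition := by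
  have hdiff : Differentiable ℝ Real.smoothTransition :=
    (Real.smoothTransition.contDiff (n := 1)).differentiable (by norm_num)
  have hzero : ∀ t : ℝ, t ∉ Set.Icc (0:ℝ) 1 → deriv Real.smoothTransition t = 0 := by
    intro t ht
    rcases not_and_or.1 ht with h | h
    · push_neg at h
      have : Real.smoothTransition =ᶠ[nhds t] fun _ => (0:ℝ) := by
        filter_upwards [Iio_mem_nhds h] with s hs
        exact Real.smoothTransition.zero_of_nonpos (le_of_lt hs)
      rw [this.deriv_eq]; simp
    · push_neg at h
      have : Real.smoothTransition =ᶠ[nhds t] fun _ => (1:ℝ) := by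
        filter_upwards [Ioi_mem_nhds h] with s hs
        exact Real.smoothTransition.one_of_one_le (le_of_lt hs)
      rw [this.deriv_eq]; simp
  have hcont : Continuous (deriv Real.smoothTransition) :=
    (Real.smoothTransition.contDiff (n := 2)).continuous_deriv (by norm_num)
  obtain ⟨M, hM⟩ := (isCompact_Icc (a := (0:ℝ)) (b := 1)).exists_bound_of_continuousOn
    hcont.continuousOn
  refine ⟨(⟨max M 0, le_max_right _ _⟩ : NNReal), lipschitzWith_of_nnnorm_deriv_le hdiff fun x => ?_⟩
  apply NNReal.coe_le_coe.mp
  simp only [coe_nnnorm]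
  by_cases hx : x ∈ Set.Icc (0:ℝ) 1
  · exact le_trans (hM x hx) (le_max_left _ _)
  · rw [hzero x hx]; simp; exact le_max_right M 0


lemma cutoff_props (d : ℕ) (K : NNReal) (hK : LipschitzWith K Real.smoothTransition)
    (ρ : ℝ) (hρ : 0 < ρ) :
    ∃ η : EuclideanSpace ℝ (Fin d) → ℝ,
      ContDiff ℝ 2 η ∧ (∀ x, 0 ≤ η x) ∧ (∀ x, η x ≤ 1) ∧
      (∀ x, ‖x‖ ≤ ρ → η x = 1) ∧ (∀ x, ρ + 1 ≤ ‖x‖ → η x = 0) ∧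
      (∀ x, ‖fderiv ℝ η x‖ ≤ K) ∧
      (∀ x, ¬(ρ ≤ ‖x‖ ∧ ‖x‖ ≤ ρ + 1) → fderiv ℝ η x = 0) := by
  set η : EuclideanSpace ℝ (Fin d) → ℝ :=
    fun x => Real.smoothTransition (ρ + 1 - ‖x‖) with hη
  have hone : ∀ x : EuclideanSpace ℝ (Fin d), ‖x‖ < ρ → ∀ᶠ y in nhds x, η y = 1 := by
    intro x hx
    have : ∀ᶠ y : EuclideanSpace ℝ (Fin d) in nhds x, ‖y‖ < ρ :=
      (continuous_norm.continuousAt).eventually_lt continuousAt_const hx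
    filter_upwards [this] with y hy
    exact Real.smoothTransition.one_of_one_le (by linarith)
  have hzero : ∀ x : EuclideanSpace ℝ (Fin d), ρ + 1 < ‖x‖ → ∀ᶠ y in nhds x, η y = 0 := by
    intro x hx
    have : ∀ᶠ y : EuclideanSpace ℝ (Fin d) in nhds x, ρ + 1 < ‖y‖ :=
      continuousAt_const.eventually_lt (continuous_norm.continuousAt) hx
    filter_upwards [this] with y hy
    exact Real.smoothTransition.zero_of_nonpos (by linarith)
  have hsmooth : ContDiff ℝ 2 η := by
    rw [contDiff_iff_contDiffAt]
    intro x
    rcases eq_or_ne x 0 with rfl | hx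
    · exact (contDiffAt_const (c := (1:ℝ))).congr_of_eventuallyEq
        ((hone 0 (by simpa using hρ)).mono fun y hy => hy)
    · exact Real.smoothTransition.contDiffAt.comp x
        ((contDiffAt_const.sub (contDiffAt_norm ℝ hx)) : ContDiffAt ℝ 2 _ x)
  have hlip : LipschitzWith K η := by
    apply LipschitzWith.of_dist_le_mul
    intro x y
    calc dist (η x) (η y) ≤ K * dist (ρ + 1 - ‖x‖) (ρ + 1 - ‖y‖) := hK.dist_le_mul _ _
    _ ≤ K * dist x y := by
        apply mul_le_mul_of_nonneg_left _ (K.coe_nonneg)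
        rw [Real.dist_eq, dist_eq_norm]
        have := abs_norm_sub_norm_le x y
        rw [abs_sub_comm] at this
        calc |ρ + 1 - ‖x‖ - (ρ + 1 - ‖y‖)| = |‖y‖ - ‖x‖| := by ring_nf
        _ ≤ ‖x - y‖ := this
  refine ⟨η, hsmooth, fun x => Real.smoothTransition.nonneg _,
    fun x => Real.smoothTransition.le_one _,
    fun x hx => Real.smoothTransition.one_of_one_le (by linarith),
    fun x hx => Real.smoothTransition.zero_of_nonpos (by linarith),
    fun x => norm_fderiv_le_of_lipschitz ℝ hlip, ?_⟩
  intro x hx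
  rcases not_and_or.1 hx with h | h
  · push_neg at h
    have heq : η =ᶠ[nhds x] fun _ => (1:ℝ) := hone x h
    have := Filter.EventuallyEq.fderiv_eq (𝕜 := ℝ) heq
    rw [this, fderiv_fun_const]; rfl
  · push_neg at h
    have heq : η =ᶠ[nhds x] fun _ => (0:ℝ) := hzero x h
    have := Filter.EventuallyEq.fderiv_eq (𝕜 := ℝ) heq
    rw [this, fderiv_fun_const]; rfl

lemma energy_est (d : ℕ) (V : ℝ → ℝ) (hVnonneg : ∀ y, 0 ≤ V y)
    (u : EuclideanSpace ℝ (Fin d) → ℝ) (hu : ContDiff ℝ 2 u)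
    (hsol : ∀ x, laplacian u x = V (u x) * u x)
    (η : EuclideanSpace ℝ (Fin d) → ℝ) (hη : ContDiff ℝ 2 η)
    (hηcs : HasCompactSupport η) :
    ∑ i : Fin d, ∫ x, (η x * fderiv ℝ u x (EuclideanSpace.single i (1:ℝ))) *
        (η x * fderiv ℝ u x (EuclideanSpace.single i (1:ℝ))) ≤
    4 * ∑ i : Fin d, ∫ x, (u x * fderiv ℝ η x (EuclideanSpace.single i (1:ℝ))) *
        (u x * fderiv ℝ η x (EuclideanSpace.single i (1:ℝ))) := by
  set e : Fin d → EuclideanSpace ℝ (Fin d) := fun i => EuclideanSpace.single i (1:ℝ) with he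
  set g : Fin d → EuclideanSpace ℝ (Fin d) → ℝ := fun i x => fderiv ℝ u x (e i) with hg
  set Dη : Fin d → EuclideanSpace ℝ (Fin d) → ℝ := fun i x => fderiv ℝ η x (e i) with hDη
  set f : EuclideanSpace ℝ (Fin d) → ℝ := fun x => η x * η x * u x with hf
  -- basic regularity
  have hucont : Continuous u := hu.continuous
  have hηcont : Continuous η := hη.continuous
  have hudiff : Differentiable ℝ u := hu.differentiable (by norm_num)
  have hηdiff : Differentiable ℝ η := hη.differentiable (by norm_num)
  have hgC1 : ∀ i, ContDiff ℝ 1 (g i) := fun i =>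
    (hu.fderiv_right (m := 1) (by norm_num)).clm_apply contDiff_const
  have hgdiff : ∀ i, Differentiable ℝ (g i) := fun i => (hgC1 i).differentiable (by norm_num)
  have hgcont : ∀ i, Continuous (g i) := fun i => (hgC1 i).continuous
  have hDηcont : ∀ i, Continuous (Dη i) := fun i =>
    ((hη.fderiv_right (m := 1) (by norm_num)).clm_apply contDiff_const).continuous
  have hg'cont : ∀ i, Continuous (fun x => fderiv ℝ (g i) x (e i)) := fun i =>
    ((hgC1 i).continuous_fderiv (by norm_num)).clm_apply continuous_const
  have hfC2 : ContDiff ℝ 2 f := (hη.mul hη).mul hu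
  have hfdiff : Differentiable ℝ f := hfC2.differentiable (by norm_num)
  have hfcs : HasCompactSupport f := (hηcs.mul_right).mul_right
  have hdfcont : ∀ i, Continuous (fun x => fderiv ℝ f x (e i)) := fun i =>
    ((hfC2.fderiv_right (m := 1) (by norm_num)).clm_apply contDiff_const).continuous
  have hdfcs : ∀ i, HasCompactSupport (fun x => fderiv ℝ f x (e i)) := fun i =>
    hfcs.fderiv_apply ℝ (e i)
  have hfcont : Continuous f := hfC2.continuous
  -- integrability
  have h1 : ∀ i, Integrable (fun x => fderiv ℝ f x (e i) * g i x) :=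
    fun i => ((hdfcont i).mul (hgcont i)).integrable_of_hasCompactSupport
      ((hdfcs i).mul_right)
  have h2 : ∀ i, Integrable (fun x => f x * fderiv ℝ (g i) x (e i)) :=
    fun i => (hfcont.mul (hg'cont i)).integrable_of_hasCompactSupport (hfcs.mul_right)
  have h3 : ∀ i, Integrable (fun x => f x * g i x) :=
    fun i => (hfcont.mul (hgcont i)).integrable_of_hasCompactSupport (hfcs.mul_right)
  -- integration by parts
  have ibp : ∀ i, ∫ x, f x * fderiv ℝ (g i) x (e i) = - ∫ x, fderiv ℝ f x (e i) * g i x :=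
    fun i => integral_mul_fderiv_eq_neg_fderiv_mul_of_integrable (h1 i) (h2 i) (h3 i)
      (fun x _ => hfdiff x) (fun x _ => hgdiff i x)
  -- sum identity: ∑ ∫ f ∂²u = ∫ f Δu ≥ 0
  have sum_eq : ∑ i : Fin d, ∫ x, f x * fderiv ℝ (g i) x (e i)
      = ∫ x, f x * laplacian u x := by
    rw [← integral_finset_sum Finset.univ (fun i _ => h2 i)]
    congr 1; ext x
    rw [laplacian, Finset.mul_sum]
  have key0 : (0:ℝ) ≤ ∫ x, f x * laplacian u x := by
    apply integral_nonneg
    intro x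
    show (0:ℝ) ≤ f x * laplacian u x
    rw [hsol x]
    show (0:ℝ) ≤ η x * η x * u x * (V (u x) * u x)
    nlinarith [mul_nonneg (hVnonneg (u x)) (mul_self_nonneg (η x * u x))]
  have sumQ : ∑ i : Fin d, ∫ x, fderiv ℝ f x (e i) * g i x ≤ 0 := by
    have heq : ∑ i : Fin d, ∫ x, fderiv ℝ f x (e i) * g i x
        = - ∑ i : Fin d, ∫ x, f x * fderiv ℝ (g i) x (e i) := by
      rw [← Finset.sum_neg_distrib]
      exact Finset.sum_congr rfl fun i _ => by rw [ibp i]; ring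
    rw [heq, sum_eq]
    linarith
  -- pointwise derivative formula
  have hdf : ∀ (i : Fin d) x, fderiv ℝ f x (e i)
      = η x * η x * g i x + u x * (η x * Dη i x + η x * Dη i x) := by
    intro i x
    have hA : fderiv ℝ f x = (η x * η x) • fderiv ℝ u x
        + u x • fderiv ℝ (fun y => η y * η y) x :=
      fderiv_mul ((hηdiff x).mul (hηdiff x)) (hudiff x)
    have hB : fderiv ℝ (fun y => η y * η y) x = η x • fderiv ℝ η x + η x • fderiv ℝ η x :=
      fderiv_mul (hηdiff x) (hηdiff x)
    rw [hA, hB]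
    simp [smul_eq_mul]
    ring
  -- integrability of the quadratic terms
  have intA : ∀ i : Fin d, Integrable (fun x => (η x * g i x) * (η x * g i x)) := by
    intro i
    have hcs : HasCompactSupport (fun x => η x * g i x) := hηcs.mul_right
    exact (((hηcont.mul (hgcont i))).mul ((hηcont.mul (hgcont i)))).integrable_of_hasCompactSupport
      hcs.mul_right
  have intB : ∀ i : Fin d, Integrable (fun x => (u x * Dη i x) * (u x * Dη i x)) := by
    intro i
    have hcs : HasCompactSupport (fun x => u x * Dη i x) :=
      HasCompactSupport.mul_left (hηcs.fderiv_apply ℝ (e i))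
    exact (((hucont.mul (hDηcont i))).mul ((hucont.mul (hDηcont i)))).integrable_of_hasCompactSupport
      hcs.mul_right
  -- pointwise AM-GM and integral comparison
  have step5 : ∀ i : Fin d,
      (1/2) * (∫ x, (η x * g i x) * (η x * g i x))
        - 2 * (∫ x, (u x * Dη i x) * (u x * Dη i x))
      ≤ ∫ x, fderiv ℝ f x (e i) * g i x := by
    intro i
    have hmono : ∫ x, ((1/2) * ((η x * g i x) * (η x * g i x))
          - 2 * ((u x * Dη i x) * (u x * Dη i x)))
        ≤ ∫ x, fderiv ℝ f x (e i) * g i x := by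
      apply integral_mono (((intA i).const_mul _).sub ((intB i).const_mul _)) (h1 i)
      intro x
      simp only [Pi.sub_apply]
      rw [hdf i x]
      nlinarith [sq_nonneg (η x * g i x + 2 * (u x * Dη i x))]
    rwa [integral_sub ((intA i).const_mul _) ((intB i).const_mul _),
      integral_const_mul, integral_const_mul] at hmono
  have hsum : ∑ i : Fin d, ((1/2) * (∫ x, (η x * g i x) * (η x * g i x))
      - 2 * (∫ x, (u x * Dη i x) * (u x * Dη i x))) ≤ 0 :=
    le_trans (Finset.sum_le_sum fun i _ => step5 i) sumQ
  rw [Finset.sum_sub_distrib, ← Finset.mul_sum, ← Finset.mul_sum] at hsum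
  linarith

end LiouvilleAux

/-- **Theorem 2.3 (nonlinear Liouville-type theorem).** Let `V : ℝ → ℝ` be continuous and
nonnegative with zero set `Z_V = {y | V y = 0}` consisting of isolated points. If `u` is a
bounded, real-valued `C²` solution of `Δu = V(u) u` on `ℝ^d` whose `L²`-mass on the annuli
`{r_j ≤ |x| ≤ r_j + 1}` tends to `0` along some sequence `r_j → +∞`, then `u ≡ 0`. -/

theorem liouville_nonlinear
    (d : ℕ) (hd : 1 ≤ d)
    (V : ℝ → ℝ)
    (hVcont : Continuous V)
    (hVnonneg : ∀ y, 0 ≤ V y)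
    (hZiso : ∀ y : ℝ, V y = 0 → ∃ U ∈ nhds y, U ∩ {z : ℝ | V z = 0} = {y})
    (u : EuclideanSpace ℝ (Fin d) → ℝ)
    (hubdd : ∃ C : ℝ, ∀ x, |u x| ≤ C)
    (hu : ContDiff ℝ 2 u)
    (hsol : ∀ x, laplacian u x = V (u x) * u x)
    (r : ℕ → ℝ) (hrpos : ∀ j, 0 < r j)
    (hrtop : Tendsto r atTop atTop)
    (hdecay : Tendsto
      (fun j => ∫ x in {x : EuclideanSpace ℝ (Fin d) | r j ≤ ‖x‖ ∧ ‖x‖ ≤ r j + 1}, u x ^ 2)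
      atTop (nhds 0)) :
    ∀ x, u x = 0 := by
  classical
  obtain ⟨K, hK⟩ := st_lip
  set e : Fin d → EuclideanSpace ℝ (Fin d) := fun i => EuclideanSpace.single i (1:ℝ) with he
  set g : Fin d → EuclideanSpace ℝ (Fin d) → ℝ := fun i x => fderiv ℝ u x (e i) with hgdef
  set A : ℕ → Set (EuclideanSpace ℝ (Fin d)) :=
    fun j => {x | r j ≤ ‖x‖ ∧ ‖x‖ ≤ r j + 1} with hAdef
  have hAclosed : ∀ j, IsClosed (A j) := by
    intro j
    have : A j = (fun x : EuclideanSpace ℝ (Fin d) => ‖x‖) ⁻¹' Set.Icc (r j) (r j + 1) := by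
      ext x; simp [hAdef, Set.mem_Icc]
    rw [this]
    exact IsClosed.preimage continuous_norm isClosed_Icc
  have hAmeas : ∀ j, MeasurableSet (A j) := fun j => (hAclosed j).measurableSet
  have hAcompact : ∀ j, IsCompact (A j) := by
    intro j
    apply (isCompact_closedBall (0 : EuclideanSpace ℝ (Fin d)) (r j + 1)).of_isClosed_subset
      (hAclosed j)
    intro x hx
    simpa [Metric.mem_closedBall, dist_zero_right] using hx.2
  have hu2int : ∀ j, IntegrableOn (fun x => u x ^ 2) (A j) := fun j =>
    ((hu.continuous.pow 2).continuousOn).integrableOn_compact (hAcompact j)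
  -- choose cutoffs
  choose η hηC2 hη0 hη1 hηone hηzero hηK hηD using
    fun j => cutoff_props d K hK (r j) (hrpos j)
  have hηcs : ∀ j, HasCompactSupport (η j) := by
    intro j
    apply HasCompactSupport.intro (isCompact_closedBall (0 : EuclideanSpace ℝ (Fin d)) (r j + 1))
    intro x hx
    apply hηzero j x
    have : ¬ dist x 0 ≤ r j + 1 := hx
    rw [dist_zero_right] at this
    linarith [not_le.1 this]
  have energy := fun j => energy_est d V hVnonneg u hu hsol (η j) (hηC2 j) (hηcs j)
  have hgcont : ∀ i, Continuous (g i) := fun i =>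
    ((hu.fderiv_right (m := 1) (by norm_num)).clm_apply contDiff_const).continuous
  have hηcont : ∀ j, Continuous (η j) := fun j => (hηC2 j).continuous
  have hDηcont : ∀ j i, Continuous (fun x => fderiv ℝ (η j) x (e i)) := fun j i =>
    (((hηC2 j).fderiv_right (m := 1) (by norm_num)).clm_apply contDiff_const).continuous
  -- annulus bound for the gradient-of-cutoff terms
  have annulus_bd : ∀ j (i : Fin d),
      ∫ x, (u x * fderiv ℝ (η j) x (e i)) * (u x * fderiv ℝ (η j) x (e i))
        ≤ (K:ℝ)^2 * ∫ x in A j, u x ^ 2 := by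
    intro j i
    have hIntInd : Integrable ((A j).indicator (fun x => (K:ℝ)^2 * u x ^ 2)) :=
      IntegrableOn.integrable_indicator ((hu2int j).const_mul _) (hAmeas j)
    have hIntL : Integrable (fun x => (u x * fderiv ℝ (η j) x (e i))
        * (u x * fderiv ℝ (η j) x (e i))) := by
      have hcs : HasCompactSupport (fun x => u x * fderiv ℝ (η j) x (e i)) :=
        HasCompactSupport.mul_left ((hηcs j).fderiv_apply ℝ (e i))
      exact ((hu.continuous.mul (hDηcont j i)).mul
        (hu.continuous.mul (hDηcont j i))).integrable_of_hasCompactSupport hcs.mul_right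
    have hpt : ∀ x, (u x * fderiv ℝ (η j) x (e i)) * (u x * fderiv ℝ (η j) x (e i))
        ≤ (A j).indicator (fun x => (K:ℝ)^2 * u x ^ 2) x := by
      intro x
      by_cases hx : x ∈ A j
      · rw [Set.indicator_of_mem hx]
        have habs : |fderiv ℝ (η j) x (e i)| ≤ (K:ℝ) := by
          have h1 : ‖fderiv ℝ (η j) x (e i)‖ ≤ ‖fderiv ℝ (η j) x‖ * ‖e i‖ :=
            ContinuousLinearMap.le_opNorm _ _
          have h2 : ‖e i‖ = 1 := by
            rw [he]; simp [EuclideanSpace.norm_single]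
          rw [h2, mul_one] at h1
          exact le_trans h1 (hηK j x)
        have h3 : (fderiv ℝ (η j) x (e i))^2 ≤ (K:ℝ)^2 := by
          rw [← sq_abs]
          exact pow_le_pow_left₀ (abs_nonneg _) habs 2
        nlinarith [sq_nonneg (u x)]
      · rw [Set.indicator_of_notMem hx]
        have hD0 : fderiv ℝ (η j) x = 0 := hηD j x (by simpa [hAdef] using hx)
        rw [hD0]
        simp
    calc ∫ x, (u x * fderiv ℝ (η j) x (e i)) * (u x * fderiv ℝ (η j) x (e i))
        ≤ ∫ x, (A j).indicator (fun x => (K:ℝ)^2 * u x ^ 2) x :=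
          integral_mono hIntL hIntInd hpt
      _ = ∫ x in A j, (K:ℝ)^2 * u x ^ 2 := integral_indicator (hAmeas j)
      _ = (K:ℝ)^2 * ∫ x in A j, u x ^ 2 := integral_const_mul _ _
  -- gradient vanishes everywhere
  have hgzero : ∀ (i : Fin d) (x₀ : EuclideanSpace ℝ (Fin d)), g i x₀ = 0 := by
    intro i x₀
    set R : ℝ := ‖x₀‖ + 1 with hR
    have hIntBall : IntegrableOn (fun x => g i x * g i x) (Metric.ball 0 R) := by
      apply IntegrableOn.mono_set _ Metric.ball_subset_closedBall
      exact (((hgcont i).mul (hgcont i)).continuousOn).integrableOn_compact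
        (isCompact_closedBall _ _)
    have hball_le : ∀ j, R ≤ r j →
        ∫ x in Metric.ball (0 : EuclideanSpace ℝ (Fin d)) R, g i x * g i x
          ≤ (4 * d * (K:ℝ)^2) * ∫ x in A j, u x ^ 2 := by
      intro j hj
      have hIntS : ∀ i' : Fin d, Integrable (fun x => (η j x * g i' x) * (η j x * g i' x)) := by
        intro i'
        exact (((hηcont j).mul (hgcont i')).mul
          ((hηcont j).mul (hgcont i'))).integrable_of_hasCompactSupport
          ((hηcs j).mul_right).mul_right
      have step1 : ∫ x in Metric.ball (0 : EuclideanSpace ℝ (Fin d)) R, g i x * g i x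
          = ∫ x in Metric.ball (0 : EuclideanSpace ℝ (Fin d)) R,
              (η j x * g i x) * (η j x * g i x) := by
        apply setIntegral_congr_fun Metric.isOpen_ball.measurableSet
        intro x hx
        have hxlt : ‖x‖ < R := by simpa [Metric.mem_ball, dist_zero_right] using hx
        show g i x * g i x = η j x * g i x * (η j x * g i x)
        rw [hηone j x (by linarith)]
        ring
      have step2 : ∫ x in Metric.ball (0 : EuclideanSpace ℝ (Fin d)) R,
            (η j x * g i x) * (η j x * g i x)
          ≤ ∫ x, (η j x * g i x) * (η j x * g i x) :=
        setIntegral_le_integral (hIntS i) (Filter.Eventually.of_forall fun x => mul_self_nonneg _)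
      have step3 : ∫ x, (η j x * g i x) * (η j x * g i x)
          ≤ ∑ i' : Fin d, ∫ x, (η j x * g i' x) * (η j x * g i' x) := by
        apply Finset.single_le_sum (f := fun i' =>
          ∫ x, (η j x * g i' x) * (η j x * g i' x)) _ (Finset.mem_univ i)
        intro i' _
        exact integral_nonneg fun x => mul_self_nonneg _
      have step4 : ∑ i' : Fin d, ∫ x, (u x * fderiv ℝ (η j) x (e i'))
            * (u x * fderiv ℝ (η j) x (e i'))
          ≤ (d : ℝ) * ((K:ℝ)^2 * ∫ x in A j, u x ^ 2) := by
        calc ∑ i' : Fin d, ∫ x, (u x * fderiv ℝ (η j) x (e i'))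
              * (u x * fderiv ℝ (η j) x (e i'))
            ≤ ∑ _i' : Fin d, (K:ℝ)^2 * ∫ x in A j, u x ^ 2 :=
              Finset.sum_le_sum fun i' _ => annulus_bd j i'
          _ = (d : ℝ) * ((K:ℝ)^2 * ∫ x in A j, u x ^ 2) := by
              rw [Finset.sum_const, Finset.card_univ, Fintype.card_fin, nsmul_eq_mul]
      calc ∫ x in Metric.ball (0 : EuclideanSpace ℝ (Fin d)) R, g i x * g i x
          ≤ ∑ i' : Fin d, ∫ x, (η j x * g i' x) * (η j x * g i' x) := by
            rw [step1]; exact le_trans step2 step3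
        _ ≤ 4 * ∑ i' : Fin d, ∫ x, (u x * fderiv ℝ (η j) x (e i'))
              * (u x * fderiv ℝ (η j) x (e i')) := energy j
        _ ≤ 4 * ((d : ℝ) * ((K:ℝ)^2 * ∫ x in A j, u x ^ 2)) := by linarith [step4]
        _ = (4 * d * (K:ℝ)^2) * ∫ x in A j, u x ^ 2 := by ring
    have htend : Tendsto (fun j => (4 * d * (K:ℝ)^2) * ∫ x in A j, u x ^ 2)
        atTop (nhds 0) := by
      have := hdecay.const_mul (4 * (d:ℝ) * (K:ℝ)^2)
      simpa using this
    have hle0 : ∫ x in Metric.ball (0 : EuclideanSpace ℝ (Fin d)) R, g i x * g i x ≤ 0 := by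
      apply ge_of_tendsto htend
      filter_upwards [hrtop.eventually_ge_atTop R] with j hj
      exact hball_le j hj
    have hge0 : 0 ≤ ∫ x in Metric.ball (0 : EuclideanSpace ℝ (Fin d)) R, g i x * g i x :=
      setIntegral_nonneg Metric.isOpen_ball.measurableSet fun x _ => mul_self_nonneg _
    by_contra hne
    have hposvol : 0 < volume (Function.support (fun x => g i x * g i x) ∩
        Metric.ball (0 : EuclideanSpace ℝ (Fin d)) R) := by
      have hopen : IsOpen ({x | g i x ≠ 0} ∩ Metric.ball (0 : EuclideanSpace ℝ (Fin d)) R) :=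
        (isOpen_compl_singleton.preimage (hgcont i)).inter Metric.isOpen_ball
      have hmem : x₀ ∈ {x | g i x ≠ 0} ∩ Metric.ball (0 : EuclideanSpace ℝ (Fin d)) R := by
        constructor
        · exact hne
        · rw [Metric.mem_ball, dist_zero_right, hR]; linarith
      have hsub : {x | g i x ≠ 0} ∩ Metric.ball (0 : EuclideanSpace ℝ (Fin d)) R ⊆
          Function.support (fun x => g i x * g i x) ∩
            Metric.ball (0 : EuclideanSpace ℝ (Fin d)) R := by
        intro x hx
        exact ⟨mul_self_ne_zero.2 hx.1, hx.2⟩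
      exact lt_of_lt_of_le (hopen.measure_pos volume ⟨x₀, hmem⟩) (measure_mono hsub)
    have hpos : 0 < ∫ x in Metric.ball (0 : EuclideanSpace ℝ (Fin d)) R, g i x * g i x := by
      rw [setIntegral_pos_iff_support_of_nonneg_ae
        (Filter.Eventually.of_forall fun x => mul_self_nonneg _) hIntBall]
      exact hposvol
    linarith
  -- u is constant
  have hfd : ∀ x, fderiv ℝ u x = 0 := by
    intro x
    apply ContinuousLinearMap.ext
    intro v
    have hv := ((EuclideanSpace.basisFun (Fin d) ℝ).toBasis).sum_repr v
    rw [← hv, map_sum]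
    rw [ContinuousLinearMap.zero_apply]
    apply Finset.sum_eq_zero
    intro i _
    rw [ContinuousLinearMap.map_smul]
    have : ((EuclideanSpace.basisFun (Fin d) ℝ).toBasis) i = e i := by
      rw [OrthonormalBasis.coe_toBasis, EuclideanSpace.basisFun_apply, he]
    rw [this]
    have := hgzero i x
    rw [hgdef] at this
    simp only at this
    rw [this]
    simp
  have hconst : ∀ x, u x = u 0 := fun x =>
    is_const_of_fderiv_eq_zero (hu.differentiable (by norm_num)) hfd x 0
  -- conclude u 0 = 0 from the annulus decay
  set c : ℝ := u 0 with hc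
  have i0 : Fin d := ⟨0, hd⟩
  set m : ℝ := (volume (Metric.ball (0 : EuclideanSpace ℝ (Fin d)) (1/2))).toReal with hm
  have hmpos : 0 < m := by
    rw [hm]
    apply ENNReal.toReal_pos
    · exact (Metric.measure_ball_pos volume _ (by norm_num)).ne'
    · exact (measure_ball_lt_top).ne
  have hlow : ∀ j, c^2 * m ≤ ∫ x in A j, u x ^ 2 := by
    intro j
    have hsubball : Metric.ball (EuclideanSpace.single i0 (r j + 1/2)) (1/2) ⊆ A j := by
      intro y hy
      rw [Metric.mem_ball] at hy
      have hnorm : ‖EuclideanSpace.single i0 (r j + 1/2)‖ = r j + 1/2 := by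
        rw [EuclideanSpace.norm_single, Real.norm_eq_abs, abs_of_pos]
        linarith [hrpos j]
      have h1 : ‖y - EuclideanSpace.single i0 (r j + 1/2)‖ < 1/2 := by
        rwa [← dist_eq_norm]
      constructor
      · have := norm_sub_norm_le (EuclideanSpace.single i0 (r j + 1/2)) y
        rw [hnorm] at this
        have h2 : ‖EuclideanSpace.single i0 (r j + 1/2) - y‖ < 1/2 := by
          rwa [norm_sub_rev]
        linarith
      · have := norm_sub_norm_le y (EuclideanSpace.single i0 (r j + 1/2))
        rw [hnorm] at this
        linarith
    have hAfin : volume (A j) ≠ ⊤ := by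
      apply ne_of_lt
      apply lt_of_le_of_lt (measure_mono (fun x hx => ?_))
        (measure_closedBall_lt_top (x := (0:EuclideanSpace ℝ (Fin d))) (r := r j + 1))
      rw [Metric.mem_closedBall, dist_zero_right]; exact hx.2
    have hvol : m ≤ (volume (A j)).toReal := by
      rw [hm]
      apply (ENNReal.toReal_le_toReal (measure_ball_lt_top).ne hAfin).mpr
      calc volume (Metric.ball (0 : EuclideanSpace ℝ (Fin d)) (1/2))
          = volume (Metric.ball (EuclideanSpace.single i0 (r j + 1/2)) (1/2)) :=
            (Measure.addHaar_ball_center volume _ _).symm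
        _ ≤ volume (A j) := measure_mono hsubball
    have heq : ∫ x in A j, u x ^ 2 = (volume (A j)).toReal * c^2 := by
      have h1 : ∫ x in A j, u x ^ 2 = ∫ _x in A j, c^2 :=
        setIntegral_congr_fun (hAmeas j) (fun x _ => by rw [hconst x])
      rw [h1, setIntegral_const, smul_eq_mul]; rfl
    rw [heq]
    have := sq_nonneg c
    nlinarith
  have hc0 : c = 0 := by
    have hle : c^2 * m ≤ 0 := by
      apply ge_of_tendsto hdecay
      exact Filter.Eventually.of_forall hlow
    have h3 : c ^ 2 = 0 := le_antisymm (by nlinarith) (sq_nonneg c)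
    exact (pow_eq_zero_iff two_ne_zero).mp h3
  intro x
  rw [hconst x]
  exact hc0
end

section
/- (Key local-energy inequality.) Let d ≥ 2, let V : ℝ^d → ℝ be bounded, nonnegative, and continuous, and let u : ℝ^d → ℝ be a twice continuously differentiable solution of Δu = V·u on ℝ^d. Then there exists a constant C′ > 0, depending only on V and the dimension, such that for every ball B = B(x_0, R) ⊂ ℝ^d and every r ≥ 1 with B ⊆ B(0, r + 3/8), one has 0 ≤ ∫_B V(x)·u(x)² dx ≤ C′ ∫_{r ≤ |x| ≤ r+1} u(x)² dx. -/
open MeasureTheory Filter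
section KeyAux
open Set

lemma div_integral_zero {n : ℕ}
    (f : Fin (n+1) → EuclideanSpace ℝ (Fin (n+1)) → ℝ)
    (f' : Fin (n+1) → EuclideanSpace ℝ (Fin (n+1)) → (EuclideanSpace ℝ (Fin (n+1)) →L[ℝ] ℝ))
    (hf : ∀ i, Continuous (f i))
    (hder : ∀ i x, HasFDerivAt (f i) (f' i x) x)
    (hdivc : Continuous fun x => ∑ i, f' i x (EuclideanSpace.single i (1:ℝ)))
    (S : ℝ) (hS : 0 < S)
    (hsupp : ∀ i x, S ≤ ‖x‖ → f i x = 0) :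
    ∫ x, ∑ i, f' i x (EuclideanSpace.single i (1:ℝ)) = 0 := by
  classical
  have hd : 0 < n + 1 := Nat.succ_pos n
  -- the derivative vanishes where the function vanishes on an open set
  have hf'0 : ∀ i (x : EuclideanSpace ℝ (Fin (n+1))), S < ‖x‖ → f' i x = 0 := by
    intro i x hx
    have hop : IsOpen {y : EuclideanSpace ℝ (Fin (n+1)) | S < ‖y‖} := isOpen_lt continuous_const continuous_norm
    have hev : f i =ᶠ[nhds x] (fun _ => 0) :=
      Filter.eventually_of_mem (hop.mem_nhds hx) (fun y hy => hsupp i y (le_of_lt hy))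
    have h0 : HasFDerivAt (f i) 0 x :=
      (hasFDerivAt_const (0:ℝ) x (𝕜 := ℝ)).congr_of_eventuallyEq hev
    exact (hder i x).unique h0
  have hdiv0 : ∀ x : EuclideanSpace ℝ (Fin (n+1)), S < ‖x‖ → ∑ i, f' i x (EuclideanSpace.single i (1:ℝ)) = 0 := by
    intro x hx
    simp [hf'0 _ x hx]
  -- coordinates ≤ norm
  have hcoord : ∀ (x : EuclideanSpace ℝ (Fin (n+1))) (i : Fin (n+1)), |x i| ≤ ‖x‖ := by
    intro x i
    rw [EuclideanSpace.norm_eq]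
    have h1 : |x i| = Real.sqrt (|x i| ^ 2) := by
      rw [Real.sqrt_sq_eq_abs, abs_abs]
    rw [h1]
    apply Real.sqrt_le_sqrt
    have := Finset.single_le_sum (f := fun j => ‖x j‖ ^ 2)
      (fun j _ => by positivity) (Finset.mem_univ i)
    simpa using this
  -- transfer to the Pi type
  set L : (Fin (n+1) → ℝ) ≃L[ℝ] EuclideanSpace ℝ (Fin (n+1)) :=
    (PiLp.continuousLinearEquiv 2 ℝ (fun _ : Fin (n+1) => ℝ)).symm with hL
  have hLapp : ∀ (y : Fin (n+1) → ℝ) (i : Fin (n+1)), L y i = y i := by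
    intro y i
    simp [hL, PiLp.continuousLinearEquiv_symm_apply]
  have hLnorm : ∀ (y : Fin (n+1) → ℝ) (i : Fin (n+1)), |y i| ≤ ‖L y‖ := by
    intro y i
    have := hcoord (L y) i
    rwa [hLapp] at this
  have hLsingle : ∀ i : Fin (n+1), L (Pi.single i (1:ℝ)) = EuclideanSpace.single i (1:ℝ) := by
    intro i
    simp [hL, PiLp.continuousLinearEquiv_symm_apply, PiLp.toLp_single]
  set g : EuclideanSpace ℝ (Fin (n+1)) → ℝ :=
    fun x => ∑ i, f' i x (EuclideanSpace.single i (1:ℝ)) with hg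
  have key := MeasureTheory.integral_divergence_of_hasFDerivAt_off_countable'
    (fun _ : Fin (n+1) => -(S+1)) (fun _ : Fin (n+1) => (S+1))
    (fun _ => by norm_num; linarith)
    (fun i y => f i (L y))
    (fun i y => (f' i (L y)).comp (L : (Fin (n+1) → ℝ) →L[ℝ] EuclideanSpace ℝ (Fin (n+1))))
    ∅ Set.countable_empty
    (fun i => ((hf i).comp L.continuous).continuousOn)
    (fun y _ i => ((hder i (L y)).comp y L.hasFDerivAt))
    ?_
  · have hdivL : ∀ y : Fin (n+1) → ℝ,
        (∑ i, ((f' i (L y)).comp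
          (L : (Fin (n+1) → ℝ) →L[ℝ] EuclideanSpace ℝ (Fin (n+1)))) (Pi.single i (1:ℝ)))
          = g (L y) := by
      intro y
      refine Finset.sum_congr rfl fun i _ => ?_
      rw [ContinuousLinearMap.comp_apply]
      congr 1
    have hzero : ∀ (i : Fin (n+1)) (c : ℝ) (y : Fin n → ℝ), S + 1 ≤ |c| →
        f i (L (i.insertNth c y)) = 0 := by
      intro i c y hc
      refine hsupp i _ ?_
      have h1 := hLnorm (i.insertNth c y) i
      rw [Fin.insertNth_apply_same] at h1
      linarith
    have hfaces : ∑ i : Fin (n+1),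
        ((∫ x in Set.Icc ((fun _ => -(S+1)) ∘ i.succAbove) ((fun _ => (S+1:ℝ)) ∘ i.succAbove),
          f i (L (i.insertNth ((fun _ : Fin (n+1) => (S+1:ℝ)) i) x))) -
         ∫ x in Set.Icc ((fun _ => -(S+1)) ∘ i.succAbove) ((fun _ => (S+1:ℝ)) ∘ i.succAbove),
          f i (L (i.insertNth ((fun _ : Fin (n+1) => -(S+1:ℝ)) i) x))) = 0 := by
      refine Finset.sum_eq_zero fun i _ => ?_
      have e1 : ∀ x : Fin n → ℝ, f i (L (i.insertNth (S+1:ℝ) x)) = 0 := fun x =>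
        hzero i _ x (by rw [abs_of_pos (by linarith)])
      have e2 : ∀ x : Fin n → ℝ, f i (L (i.insertNth (-(S+1):ℝ) x)) = 0 := fun x =>
        hzero i _ x (by rw [abs_of_neg (by linarith)]; linarith)
      have h3 : (∫ x in Set.Icc ((fun _ => -(S+1)) ∘ i.succAbove)
          ((fun _ => (S+1:ℝ)) ∘ i.succAbove), f i (L (i.insertNth (S+1:ℝ) x))) -
          (∫ x in Set.Icc ((fun _ => -(S+1)) ∘ i.succAbove)
          ((fun _ => (S+1:ℝ)) ∘ i.succAbove), f i (L (i.insertNth (-(S+1):ℝ) x))) = 0 := by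
        have k1 : (fun x : Fin n → ℝ => f i (L (i.insertNth (S+1:ℝ) x)))
            = fun _ => (0:ℝ) := funext e1
        have k2 : (fun x : Fin n → ℝ => f i (L (i.insertNth (-(S+1):ℝ) x)))
            = fun _ => (0:ℝ) := funext e2
        rw [k1, k2]
        simp
      exact h3
    rw [hfaces] at key
    have hIccEq : (∫ y in Set.Icc (fun _ : Fin (n+1) => -(S+1)) (fun _ => (S+1:ℝ)),
        ∑ i, ((f' i (L y)).comp
          (L : (Fin (n+1) → ℝ) →L[ℝ] EuclideanSpace ℝ (Fin (n+1)))) (Pi.single i (1:ℝ)))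
        = ∫ y in Set.Icc (fun _ : Fin (n+1) => -(S+1)) (fun _ => (S+1:ℝ)), g (L y) :=
      setIntegral_congr_fun measurableSet_Icc (fun y _ => hdivL y)
    rw [hIccEq] at key
    have hcompl : ∀ y : Fin (n+1) → ℝ,
        y ∉ Set.Icc (fun _ : Fin (n+1) => -(S+1)) (fun _ => (S+1:ℝ)) → g (L y) = 0 := by
      intro y hy
      have hex : ∃ i, S + 1 < |y i| := by
        by_contra hcon
        push_neg at hcon
        refine hy ⟨fun i => ?_, fun i => ?_⟩
        · show -(S+1) ≤ y i
          have := (abs_le.mp (hcon i)).1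
          linarith
        · show y i ≤ S+1
          exact (abs_le.mp (hcon i)).2
      obtain ⟨i, hi⟩ := hex
      have : S < ‖L y‖ := lt_of_lt_of_le (by linarith [hLnorm y i]) (hLnorm y i)
      exact hdiv0 (L y) this
    rw [setIntegral_eq_integral_of_forall_compl_eq_zero hcompl] at key
    have hmp := (EuclideanSpace.volume_preserving_symm_measurableEquiv_toLp (Fin (n+1))).symm
    have hcoe : ∀ y : Fin (n+1) → ℝ,
        L y = (MeasurableEquiv.toLp 2 (Fin (n+1) → ℝ)).symm.symm y := by
      intro y
      rfl
    have hint : (∫ y : Fin (n+1) → ℝ, g (L y)) = ∫ x, g x := by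
      simp_rw [hcoe]
      exact hmp.integral_comp (MeasurableEquiv.toLp 2 (Fin (n+1) → ℝ)).symm.symm.measurableEmbedding g
    rw [hint] at key
    exact key
  · have hcont : Continuous fun y : Fin (n+1) → ℝ =>
        (∑ i, ((f' i (L y)).comp
          (L : (Fin (n+1) → ℝ) →L[ℝ] EuclideanSpace ℝ (Fin (n+1)))) (Pi.single i (1:ℝ))) := by
      have : (fun y : Fin (n+1) → ℝ =>
        (∑ i, ((f' i (L y)).comp
          (L : (Fin (n+1) → ℝ) →L[ℝ] EuclideanSpace ℝ (Fin (n+1)))) (Pi.single i (1:ℝ))))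
          = fun y => g (L y) := by
        funext y
        refine Finset.sum_congr rfl fun i _ => ?_
        rw [ContinuousLinearMap.comp_apply]
        congr 1
      rw [this]
      exact hdivc.comp L.continuous
    exact hcont.continuousOn.integrableOn_compact isCompact_Icc

lemma st_deriv_bound : ∃ K : ℝ, 0 ≤ K ∧ ∀ t : ℝ, |deriv Real.smoothTransition t| ≤ K := by
  have hcd : Continuous (deriv Real.smoothTransition) :=
    (Real.smoothTransition.contDiff (n := 1)).continuous_deriv le_rfl
  obtain ⟨C, hC⟩ := (isCompact_Icc (a := (0:ℝ)) (b := 1)).exists_bound_of_continuousOn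
    (hcd.continuousOn (s := Set.Icc 0 1))
  refine ⟨max C 0, le_max_right _ _, fun t => ?_⟩
  rcases le_or_gt t 0 with ht | ht
  · rcases eq_or_lt_of_le ht with rfl | ht'
    · exact le_trans (hC 0 (by norm_num)) (le_max_left _ _)
    · have hloc : Real.smoothTransition =ᶠ[nhds t] fun _ => 0 :=
        Filter.eventually_of_mem (Iio_mem_nhds ht')
          (fun y hy => Real.smoothTransition.zero_of_nonpos (le_of_lt hy))
      rw [hloc.deriv_eq, deriv_const]
      simp [le_max_right]
  · rcases le_or_gt t 1 with ht1 | ht1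
    · exact le_trans (hC t ⟨ht.le, ht1⟩) (le_max_left _ _)
    · have hloc : Real.smoothTransition =ᶠ[nhds t] fun _ => 1 :=
        Filter.eventually_of_mem (Ioi_mem_nhds ht1)
          (fun y hy => Real.smoothTransition.one_of_one_le (le_of_lt hy))
      rw [hloc.deriv_eq, deriv_const]
      simp [le_max_right]

lemma cutoff_exists {d : ℕ} (K : ℝ) (hK : 0 ≤ K)
    (hKb : ∀ t : ℝ, |deriv Real.smoothTransition t| ≤ K)
    (r : ℝ) (hr : 1 ≤ r) :
    ∃ (φ : EuclideanSpace ℝ (Fin d) → ℝ)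
      (φ' : EuclideanSpace ℝ (Fin d) → (EuclideanSpace ℝ (Fin d) →L[ℝ] ℝ)),
      Continuous φ ∧ Continuous φ' ∧ (∀ x, HasFDerivAt φ (φ' x) x) ∧
      (∀ x, 0 ≤ φ x ∧ φ x ≤ 1) ∧
      (∀ x, ‖x‖ ≤ r + 1/2 → φ x = 1) ∧
      (∀ x, r + 7/8 ≤ ‖x‖ → φ x = 0) ∧
      (∀ x, ‖x‖ < r + 1/2 → φ' x = 0) ∧
      (∀ x, r + 7/8 < ‖x‖ → φ' x = 0) ∧
      (∀ x, ∑ i, (φ' x (EuclideanSpace.single i (1:ℝ)))^2 ≤ 9 * K^2) := by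
  set A : ℝ := (r + 7/8)^2 with hA
  set B : ℝ := (r + 1/2)^2 with hB
  have hAB : 0 < A - B := by nlinarith
  set m : ℝ := 1 / (A - B) with hm
  have hm0 : 0 < m := by positivity
  have hABm : (A - B) * m = 1 := by rw [hm]; field_simp
  set st := Real.smoothTransition with hst
  set η : ℝ → ℝ := fun t => st ((A - t) * m) with hη
  set φ : EuclideanSpace ℝ (Fin d) → ℝ := fun x => η (‖x‖^2) with hφdef
  set sc : EuclideanSpace ℝ (Fin d) → ℝ :=
    fun x => deriv st ((A - ‖x‖^2) * m) * (-1 * m) with hsc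
  set φ' : EuclideanSpace ℝ (Fin d) → (EuclideanSpace ℝ (Fin d) →L[ℝ] ℝ) :=
    fun x => sc x • ((2:ℕ) • (innerSL ℝ x)) with hφ'
  have hstdiff : ∀ s : ℝ, HasDerivAt st (deriv st s) s :=
    fun s => ((Real.smoothTransition.contDiff (n := 1)).differentiable
      (by norm_num)).differentiableAt.hasDerivAt
  have hφder : ∀ x, HasFDerivAt φ (φ' x) x := by
    intro x
    have hinner : HasDerivAt (fun t : ℝ => (A - t) * m) (-1 * m) (‖x‖^2) := by
      exact ((hasDerivAt_id (‖x‖^2)).const_sub A).mul_const m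
    have hq : HasFDerivAt (fun y : EuclideanSpace ℝ (Fin d) => ‖y‖^2)
        ((2:ℕ) • (innerSL ℝ x)) x := (hasStrictFDerivAt_norm_sq x).hasFDerivAt
    have hout : HasDerivAt η (deriv st ((A - ‖x‖^2) * m) * (-1 * m)) (‖x‖^2) :=
      (hstdiff _).comp _ hinner
    exact hout.comp_hasFDerivAt x hq
  have hφ1 : ∀ x : EuclideanSpace ℝ (Fin d), ‖x‖ ≤ r + 1/2 → φ x = 1 := by
    intro x hx
    have hq : ‖x‖^2 ≤ B := by
      rw [hB]
      exact pow_le_pow_left₀ (norm_nonneg x) hx 2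
    have : 1 ≤ (A - ‖x‖^2) * m := by
      calc (1:ℝ) = (A - B) * m := hABm.symm
      _ ≤ (A - ‖x‖^2) * m := by
        apply mul_le_mul_of_nonneg_right _ hm0.le
        linarith
    exact Real.smoothTransition.one_of_one_le this
  have hφ0 : ∀ x : EuclideanSpace ℝ (Fin d), r + 7/8 ≤ ‖x‖ → φ x = 0 := by
    intro x hx
    have hq : A ≤ ‖x‖^2 := by
      rw [hA]
      exact pow_le_pow_left₀ (by linarith) hx 2
    exact Real.smoothTransition.zero_of_nonpos
      (mul_nonpos_of_nonpos_of_nonneg (by linarith) hm0.le)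
  have hφ'c : Continuous φ' := by
    apply Continuous.fun_smul
    · exact ((Real.smoothTransition.contDiff (n := 1)).continuous_deriv le_rfl).comp
        (((continuous_const.sub ((continuous_norm).pow 2)).mul continuous_const))
        |>.mul continuous_const
    · exact continuous_const.smul (innerSL ℝ).continuous
  have hφc : Continuous φ :=
    Real.smoothTransition.continuous.comp
      ((continuous_const.sub ((continuous_norm).pow 2)).mul continuous_const)
  have hφ'0in : ∀ x : EuclideanSpace ℝ (Fin d), ‖x‖ < r + 1/2 → φ' x = 0 := by
    intro x hx
    have hop : IsOpen {y : EuclideanSpace ℝ (Fin d) | ‖y‖ < r + 1/2} :=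
      isOpen_lt continuous_norm continuous_const
    have hev : φ =ᶠ[nhds x] fun _ => 1 :=
      Filter.eventually_of_mem (hop.mem_nhds hx) (fun y hy => hφ1 y (le_of_lt hy))
    exact (hφder x).unique ((hasFDerivAt_const (1:ℝ) x).congr_of_eventuallyEq hev)
  have hφ'0out : ∀ x : EuclideanSpace ℝ (Fin d), r + 7/8 < ‖x‖ → φ' x = 0 := by
    intro x hx
    have hop : IsOpen {y : EuclideanSpace ℝ (Fin d) | r + 7/8 < ‖y‖} :=
      isOpen_lt continuous_const continuous_norm
    have hev : φ =ᶠ[nhds x] fun _ => 0 :=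
      Filter.eventually_of_mem (hop.mem_nhds hx) (fun y hy => hφ0 y (le_of_lt hy))
    exact (hφder x).unique ((hasFDerivAt_const (0:ℝ) x).congr_of_eventuallyEq hev)
  refine ⟨φ, φ', hφc, hφ'c, hφder,
    fun x => ⟨Real.smoothTransition.nonneg _, Real.smoothTransition.le_one _⟩,
    hφ1, hφ0, hφ'0in, hφ'0out, ?_⟩
  intro x
  rcases le_or_gt ‖x‖ (r + 7/8) with hx | hx
  · have happ : ∀ i : Fin d, φ' x (EuclideanSpace.single i (1:ℝ)) = sc x * (2 * x i) := by
      intro i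
      rw [hφ']
      have : (innerSL ℝ x) (EuclideanSpace.single i (1:ℝ)) = x i := by
        simp [EuclideanSpace.inner_single_right]
      simp only [ContinuousLinearMap.smul_apply, smul_eq_mul, nsmul_eq_mul,
        Nat.cast_ofNat, this]
    have hsum : ∑ i, (x i)^2 = ‖x‖^2 := by
      rw [EuclideanSpace.norm_eq, Real.sq_sqrt (Finset.sum_nonneg fun i _ => by positivity)]
      refine Finset.sum_congr rfl fun i _ => ?_
      rw [Real.norm_eq_abs, sq_abs]
    have hcalc : ∑ i, (φ' x (EuclideanSpace.single i (1:ℝ)))^2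
        = (sc x)^2 * 4 * ‖x‖^2 := by
      simp_rw [happ]
      rw [← hsum, Finset.mul_sum]
      refine Finset.sum_congr rfl fun i _ => by ring
    rw [hcalc]
    have hscb : |sc x| ≤ K * m := by
      rw [hsc]
      calc |deriv st ((A - ‖x‖^2) * m) * (-1 * m)|
          = |deriv st ((A - ‖x‖^2) * m)| * m := by
            rw [abs_mul]
            congr 1
            rw [abs_of_neg (by linarith)]
            ring
      _ ≤ K * m := mul_le_mul_of_nonneg_right (hKb _) hm0.le
    have hsc2 : (sc x)^2 ≤ K^2 * m^2 := by
      nlinarith [mul_self_le_mul_self (abs_nonneg (sc x)) hscb, sq_abs (sc x)]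
    have hnorm2 : ‖x‖^2 ≤ (r + 7/8)^2 := pow_le_pow_left₀ (norm_nonneg x) hx 2
    have hmb : m * (r + 7/8) ≤ 3/2 := by
      rw [hm, div_mul_eq_mul_div, one_mul, div_le_iff₀ hAB, hA, hB]
      nlinarith
    calc (sc x)^2 * 4 * ‖x‖^2 ≤ (K^2 * m^2) * 4 * (r + 7/8)^2 := by
          apply mul_le_mul _ hnorm2 (by positivity) (by positivity)
          exact mul_le_mul_of_nonneg_right hsc2 (by norm_num)
    _ = 4 * K^2 * (m * (r + 7/8))^2 := by ring
    _ ≤ 4 * K^2 * (3/2)^2 := by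
          apply mul_le_mul_of_nonneg_left _ (by positivity)
          exact pow_le_pow_left₀ (by positivity) hmb 2
    _ = 9 * K^2 := by ring
  · rw [hφ'0out x hx]
    have hz : ∀ i : Fin d,
        (((0 : EuclideanSpace ℝ (Fin d) →L[ℝ] ℝ)) (EuclideanSpace.single i (1:ℝ)))^2 = 0 := by
      intro i
      simp
    rw [Finset.sum_congr rfl (fun i _ => hz i), Finset.sum_const, smul_zero]
    positivity

end KeyAux

set_option maxHeartbeats 2000000 in
/-- **Key local-energy inequality.** If `V : ℝ^d → ℝ` is bounded, nonnegative and continuous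
and `u` is a `C²` solution of `Δu = V u` on `ℝ^d`, `d ≥ 2`, then there is `C' > 0`, depending
only on `V` and the dimension, such that for every ball `B = B(x₀, R)` and every `r ≥ 1` with
`B ⊆ B(0, r + 3/8)` one has `0 ≤ ∫_B V u² ≤ C' ∫_{r ≤ |x| ≤ r+1} u²`. -/
theorem key_local_energy_inequality
    (d : ℕ) (hd : 2 ≤ d)
    (V : EuclideanSpace ℝ (Fin d) → ℝ)
    (hVcont : Continuous V)
    (hVbdd : ∃ M : ℝ, ∀ x, |V x| ≤ M)
    (hVnonneg : ∀ x, 0 ≤ V x)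
    (u : EuclideanSpace ℝ (Fin d) → ℝ)
    (hu : ContDiff ℝ 2 u)
    (hsol : ∀ x, laplacian u x = V x * u x) :
    ∃ C' : ℝ, 0 < C' ∧ ∀ (x₀ : EuclideanSpace ℝ (Fin d)) (R : ℝ), 0 < R →
      ∀ r : ℝ, 1 ≤ r →
        Metric.ball x₀ R ⊆ Metric.ball (0 : EuclideanSpace ℝ (Fin d)) (r + 3/8) →
        0 ≤ ∫ x in Metric.ball x₀ R, V x * u x ^ 2 ∧
        ∫ x in Metric.ball x₀ R, V x * u x ^ 2
          ≤ C' * ∫ x in {x : EuclideanSpace ℝ (Fin d) | r ≤ ‖x‖ ∧ ‖x‖ ≤ r + 1}, u x ^ 2 := by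
  obtain ⟨K, hK0, hKb⟩ := st_deriv_bound
  refine ⟨9 * K^2 + 1, by positivity, ?_⟩
  intro x₀ R hR r hr hsub
  obtain ⟨n, rfl⟩ : ∃ n, d = n + 1 := ⟨d - 1, by omega⟩
  -- nonnegativity of the LHS
  have hBmeas : MeasurableSet (Metric.ball x₀ R) := measurableSet_ball
  have hLHS0 : 0 ≤ ∫ x in Metric.ball x₀ R, V x * u x ^ 2 :=
    setIntegral_nonneg hBmeas fun x _ => mul_nonneg (hVnonneg x) (sq_nonneg _)
  refine ⟨hLHS0, ?_⟩
  obtain ⟨φ, φ', hφc, hφ'c, hφder, hφ01, hφ1, hφ0, hφ'in, hφ'out, hφ'sum⟩ :=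
    cutoff_exists (d := n+1) K hK0 hKb r hr
  -- derivatives of u
  have hu1 : ContDiff ℝ 1 u := hu.of_le one_le_two
  have hfd : ∀ x, HasFDerivAt u (fderiv ℝ u x) x :=
    fun x => (hu1.differentiable (by norm_num) x).hasFDerivAt
  have hfderiv1 : ContDiff ℝ 1 (fderiv ℝ u) := hu.fderiv_right (by norm_num)
  set D : Fin (n+1) → EuclideanSpace ℝ (Fin (n+1)) → ℝ :=
    fun i x => fderiv ℝ u x (EuclideanSpace.single i (1:ℝ)) with hD
  have hDc : ∀ i, ContDiff ℝ 1 (D i) := by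
    intro i
    exact (ContinuousLinearMap.apply ℝ ℝ (EuclideanSpace.single i (1:ℝ))).contDiff.comp hfderiv1
  have hDder : ∀ i x, HasFDerivAt (D i) (fderiv ℝ (D i) x) x :=
    fun i x => ((hDc i).differentiable (by norm_num) x).hasFDerivAt
  have hDcont : ∀ i, Continuous (D i) := fun i => (hDc i).continuous
  have hDfcont : ∀ i, Continuous (fderiv ℝ (D i)) := fun i => (hDc i).continuous_fderiv (by norm_num)
  have hlap : ∀ x, ∑ i, fderiv ℝ (D i) x (EuclideanSpace.single i (1:ℝ)) = V x * u x := by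
    intro x
    have := hsol x
    unfold laplacian at this
    exact this
  -- the vector field and its derivative
  set P : EuclideanSpace ℝ (Fin (n+1)) → ℝ := fun x => φ x * φ x * u x with hP
  set P' : EuclideanSpace ℝ (Fin (n+1)) → (EuclideanSpace ℝ (Fin (n+1)) →L[ℝ] ℝ) :=
    fun x => (φ x * φ x) • fderiv ℝ u x + u x • (φ x • φ' x + φ x • φ' x) with hP'
  have hPder : ∀ x, HasFDerivAt P (P' x) x := by
    intro x
    exact ((hφder x).mul (hφder x)).mul (hfd x)
  set f : Fin (n+1) → EuclideanSpace ℝ (Fin (n+1)) → ℝ := fun i x => P x * D i x with hf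
  set f' : Fin (n+1) → EuclideanSpace ℝ (Fin (n+1)) →
      (EuclideanSpace ℝ (Fin (n+1)) →L[ℝ] ℝ) :=
    fun i x => P x • fderiv ℝ (D i) x + D i x • P' x with hf'
  have hfder : ∀ i x, HasFDerivAt (f i) (f' i x) x := by
    intro i x
    exact (hPder x).mul (hDder i x)
  have hfc : ∀ i, Continuous (f i) :=
    fun i => ((hφc.mul hφc).mul hu.continuous).mul (hDcont i)
  have hPcont : Continuous P := (hφc.mul hφc).mul hu.continuous
  -- divergence identity
  set G : EuclideanSpace ℝ (Fin (n+1)) → ℝ := fun x =>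
    P x * (V x * u x) + ∑ i, D i x * ((φ x * φ x) * D i x
      + u x * (φ x * φ' x (EuclideanSpace.single i (1:ℝ))
        + φ x * φ' x (EuclideanSpace.single i (1:ℝ)))) with hG
  have hdiv : ∀ x, (∑ i, f' i x (EuclideanSpace.single i (1:ℝ))) = G x := by
    intro x
    rw [hG]
    simp only [hf', ContinuousLinearMap.add_apply, ContinuousLinearMap.smul_apply,
      ContinuousLinearMap.coe_smul', Pi.smul_apply, smul_eq_mul, hP']
    rw [Finset.sum_add_distrib, ← Finset.mul_sum, hlap x]
  have hGc : Continuous G := by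
    apply Continuous.add
    · exact hPcont.mul (hVcont.mul hu.continuous)
    · apply continuous_finset_sum
      intro i _
      apply Continuous.mul (hDcont i)
      apply Continuous.add
      · exact (hφc.mul hφc).mul (hDcont i)
      · apply Continuous.mul hu.continuous
        apply Continuous.add
        · exact hφc.mul (hφ'c.clm_apply continuous_const)
        · exact hφc.mul (hφ'c.clm_apply continuous_const)
  have hzero : ∫ x, G x = 0 := by
    have h := div_integral_zero f f' hfc hfder ?_ (r + 7/8) (by linarith) ?_
    · rw [show (fun x => ∑ i, f' i x (EuclideanSpace.single i (1:ℝ))) = G from funext hdiv] at h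
      exact h
    · rw [show (fun x => ∑ i, f' i x (EuclideanSpace.single i (1:ℝ))) = G from funext hdiv]
      exact hGc
    · intro i x hx
      show P x * D i x = 0
      simp only [hP]
      rw [hφ0 x hx]
      ring
  -- pointwise control
  set Hs : EuclideanSpace ℝ (Fin (n+1)) → ℝ :=
    fun x => ∑ i, (φ' x (EuclideanSpace.single i (1:ℝ)))^2 with hHs
  set W : EuclideanSpace ℝ (Fin (n+1)) → ℝ := fun x => (u x * u x) * Hs x with hW
  have hHsc : Continuous Hs := by
    apply continuous_finset_sum
    intro i _
    exact (hφ'c.clm_apply continuous_const).pow 2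
  have hWc : Continuous W := (hu.continuous.mul hu.continuous).mul hHsc
  have hkey : ∀ x, P x * (V x * u x) ≤ G x + W x := by
    intro x
    have hid : (∑ i, D i x * ((φ x * φ x) * D i x
        + u x * (φ x * φ' x (EuclideanSpace.single i (1:ℝ))
          + φ x * φ' x (EuclideanSpace.single i (1:ℝ))))) + W x
        = ∑ i, (φ x * D i x + u x * φ' x (EuclideanSpace.single i (1:ℝ)))^2 := by
      simp only [hW, hHs]
      rw [Finset.mul_sum, ← Finset.sum_add_distrib]
      refine Finset.sum_congr rfl fun i _ => by ring
    have hpos : 0 ≤ ∑ i, (φ x * D i x + u x * φ' x (EuclideanSpace.single i (1:ℝ)))^2 :=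
      Finset.sum_nonneg fun i _ => sq_nonneg _
    have hGx : G x = P x * (V x * u x) + ∑ i, D i x * ((φ x * φ x) * D i x
        + u x * (φ x * φ' x (EuclideanSpace.single i (1:ℝ))
          + φ x * φ' x (EuclideanSpace.single i (1:ℝ)))) := by simp only [hG]
    linarith [hid, hpos, hGx]
  -- support facts
  have hGsupp : ∀ x, r + 7/8 < ‖x‖ → G x = 0 := by
    intro x hx
    simp only [hG, hP]
    rw [hφ0 x hx.le, hφ'out x hx]
    simp
  have hWsupp : ∀ x, ¬(r ≤ ‖x‖ ∧ ‖x‖ ≤ r + 1) → W x = 0 := by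
    intro x hx
    push_neg at hx
    rcases lt_or_ge ‖x‖ r with h | h
    · simp only [hW, hHs]
      rw [hφ'in x (by linarith)]
      simp
    · have h2 := hx h
      simp only [hW, hHs]
      rw [hφ'out x (by linarith)]
      simp
  set Lf : EuclideanSpace ℝ (Fin (n+1)) → ℝ := fun x => P x * (V x * u x) with hLf
  have hLfsupp : ∀ x, r + 7/8 < ‖x‖ → Lf x = 0 := by
    intro x hx
    simp only [hLf, hP]
    rw [hφ0 x hx.le]
    ring
  -- integrability
  have hcsG : HasCompactSupport G := by
    apply HasCompactSupport.intro
      (isCompact_closedBall (0 : EuclideanSpace ℝ (Fin (n+1))) (r + 7/8))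
    intro x hx
    rw [mem_closedBall_zero_iff, not_le] at hx
    exact hGsupp x hx
  have hcsW : HasCompactSupport W := by
    apply HasCompactSupport.intro
      (isCompact_closedBall (0 : EuclideanSpace ℝ (Fin (n+1))) (r + 1))
    intro x hx
    rw [mem_closedBall_zero_iff, not_le] at hx
    exact hWsupp x (by intro hc; linarith [hc.2])
  have hcsL : HasCompactSupport Lf := by
    apply HasCompactSupport.intro
      (isCompact_closedBall (0 : EuclideanSpace ℝ (Fin (n+1))) (r + 7/8))
    intro x hx
    rw [mem_closedBall_zero_iff, not_le] at hx
    exact hLfsupp x hx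
  have hLfc : Continuous Lf := hPcont.mul (hVcont.mul hu.continuous)
  have hGint : Integrable G := hGc.integrable_of_hasCompactSupport hcsG
  have hWint : Integrable W := hWc.integrable_of_hasCompactSupport hcsW
  have hLfint : Integrable Lf := hLfc.integrable_of_hasCompactSupport hcsL
  have hLf0 : ∀ x, 0 ≤ Lf x := by
    intro x
    simp only [hLf, hP]
    nlinarith [mul_nonneg (hVnonneg x) (sq_nonneg (φ x * u x))]
  have hmono : ∫ x, Lf x ≤ ∫ x, (G x + W x) := integral_mono hLfint (hGint.add hWint) hkey
  have hGW : ∫ x, (G x + W x) = ∫ x, W x := by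
    rw [integral_add hGint hWint, hzero, zero_add]
  -- restrict to the ball
  have hball : ∫ x in Metric.ball x₀ R, V x * u x ^ 2 = ∫ x in Metric.ball x₀ R, Lf x := by
    refine setIntegral_congr_fun hBmeas fun x hx => ?_
    have hx' : ‖x‖ < r + 3/8 := by
      have := hsub hx
      rwa [Metric.mem_ball, dist_zero_right] at this
    have h1 : φ x = 1 := hφ1 x (by linarith)
    simp only [hLf, hP, h1]
    ring
  have hball2 : ∫ x in Metric.ball x₀ R, Lf x ≤ ∫ x, Lf x :=
    setIntegral_le_integral hLfint (ae_of_all _ hLf0)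
  -- the annulus
  set ann : Set (EuclideanSpace ℝ (Fin (n+1))) := {x | r ≤ ‖x‖ ∧ ‖x‖ ≤ r + 1} with hann
  have hannclosed : IsClosed ann := by
    have he : ann = {x : EuclideanSpace ℝ (Fin (n+1)) | r ≤ ‖x‖} ∩
        {x : EuclideanSpace ℝ (Fin (n+1)) | ‖x‖ ≤ r + 1} := rfl
    rw [he]
    exact (isClosed_le continuous_const continuous_norm).inter
      (isClosed_le continuous_norm continuous_const)
  have hannmeas : MeasurableSet ann := hannclosed.measurableSet
  have hanncompact : IsCompact ann := by
    apply Metric.isCompact_of_isClosed_isBounded hannclosed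
    apply (Metric.isBounded_closedBall
      (x := (0:EuclideanSpace ℝ (Fin (n+1)))) (r := r+1)).subset
    intro x hx
    rw [mem_closedBall_zero_iff]
    exact hx.2
  have hWann : ∫ x, W x = ∫ x in ann, W x :=
    (setIntegral_eq_integral_of_forall_compl_eq_zero fun x hx => hWsupp x hx).symm
  have hWle : ∫ x in ann, W x ≤ ∫ x in ann, (9*K^2+1) * u x ^ 2 := by
    refine setIntegral_mono_on hWint.integrableOn ?_ hannmeas fun x _ => ?_
    · exact ContinuousOn.integrableOn_compact hanncompact
        ((continuous_const.mul (hu.continuous.pow 2)).continuousOn)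
    · simp only [hW, hHs]
      have h1 := hφ'sum x
      have h2 : (0:ℝ) ≤ u x ^ 2 := sq_nonneg _
      have h3 : (0:ℝ) ≤ ∑ i, (φ' x (EuclideanSpace.single i (1:ℝ)))^2 :=
        Finset.sum_nonneg fun i _ => sq_nonneg _
      nlinarith [mul_le_mul_of_nonneg_left h1 h2]
  have hconst : ∫ x in ann, (9*K^2+1) * u x ^ 2 = (9*K^2+1) * ∫ x in ann, u x ^ 2 :=
    integral_const_mul _ _
  calc ∫ x in Metric.ball x₀ R, V x * u x ^ 2
      = ∫ x in Metric.ball x₀ R, Lf x := hball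
    _ ≤ ∫ x, Lf x := hball2
    _ ≤ ∫ x, (G x + W x) := hmono
    _ = ∫ x, W x := hGW
    _ = ∫ x in ann, W x := hWann
    _ ≤ ∫ x in ann, (9*K^2+1) * u x ^ 2 := hWle
    _ = (9*K^2+1) * ∫ x in ann, u x ^ 2 := hconst
end

section
/- (Cutoff energy inequality.) Let d ≥ 1, let V : ℝ^d → ℝ be bounded, nonnegative, and continuous, let u : ℝ^d → ℝ be a twice continuously differentiable solution of Δu = V·u on ℝ^d, and let χ : ℝ^d → ℝ be a smooth compactly supported function with 0 ≤ χ ≤ 1. Setting v = χ·u, one has ∫_{ℝ^d} V(x)·v(x)² dx ≤ −∫_{ℝ^d} Δχ(x)·u(x)·v(x) dx − 2∫_{ℝ^d} (∇χ(x)·∇u(x))·v(x) dx. -/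
open MeasureTheory Filter

namespace CutoffAux

variable {d : ℕ}

/-- Partial derivative in direction `e i`. -/
noncomputable def pd (f : EuclideanSpace ℝ (Fin d) → ℝ) (i : Fin d)
    (x : EuclideanSpace ℝ (Fin d)) : ℝ :=
  fderiv ℝ f x (EuclideanSpace.single i (1 : ℝ))

lemma laplacian_eq (f : EuclideanSpace ℝ (Fin d) → ℝ) (x : EuclideanSpace ℝ (Fin d)) :
    laplacian f x = ∑ i, pd (pd f i) i x := rfl

lemma contDiff_pd {n m : WithTop ℕ∞} {f : EuclideanSpace ℝ (Fin d) → ℝ}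
    (hf : ContDiff ℝ n f) (h : m + 1 ≤ n) (i : Fin d) : ContDiff ℝ m (pd f i) :=
  (hf.fderiv_right h).clm_apply contDiff_const

lemma continuous_pd {n : WithTop ℕ∞} {f : EuclideanSpace ℝ (Fin d) → ℝ}
    (hf : ContDiff ℝ n f) (h : 1 ≤ n) (i : Fin d) : Continuous (pd f i) :=
  (hf.continuous_fderiv (ne_of_gt (lt_of_lt_of_le zero_lt_one h))).clm_apply continuous_const

lemma hcs_pd {f : EuclideanSpace ℝ (Fin d) → ℝ} (hf : HasCompactSupport f) (i : Fin d) :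
    HasCompactSupport (pd f i) :=
  hf.fderiv_apply ℝ (EuclideanSpace.single i (1 : ℝ))

lemma pd_mul {f g : EuclideanSpace ℝ (Fin d) → ℝ}
    (hf : Differentiable ℝ f) (hg : Differentiable ℝ g) (i : Fin d)
    (x : EuclideanSpace ℝ (Fin d)) :
    pd (fun y => f y * g y) i x = pd f i x * g x + f x * pd g i x := by
  simp only [pd, fderiv_fun_mul (hf x) (hg x), ContinuousLinearMap.add_apply,
    ContinuousLinearMap.smul_apply, smul_eq_mul]
  ring

lemma pd_pd_mul {f g : EuclideanSpace ℝ (Fin d) → ℝ}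
    (hf : ContDiff ℝ 2 f) (hg : ContDiff ℝ 2 g) (i : Fin d)
    (x : EuclideanSpace ℝ (Fin d)) :
    pd (pd (fun y => f y * g y) i) i x
      = pd (pd f i) i x * g x + 2 * (pd f i x * pd g i x) + f x * pd (pd g i) i x := by
  have hfd : Differentiable ℝ f := hf.differentiable two_ne_zero
  have hgd : Differentiable ℝ g := hg.differentiable two_ne_zero
  have hf1 : ContDiff ℝ 1 (pd f i) := contDiff_pd hf (by norm_num) i
  have hg1 : ContDiff ℝ 1 (pd g i) := contDiff_pd hg (by norm_num) i
  have h1 : pd (fun y => f y * g y) i = fun y => pd f i y * g y + f y * pd g i y :=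
    funext (pd_mul hfd hgd i)
  have dA : Differentiable ℝ (fun y => pd f i y * g y) :=
    (hf1.differentiable one_ne_zero).mul hgd
  have dB : Differentiable ℝ (fun y => f y * pd g i y) :=
    hfd.mul (hg1.differentiable one_ne_zero)
  rw [h1]
  have : pd (fun y => pd f i y * g y + f y * pd g i y) i x
      = pd (fun y => pd f i y * g y) i x + pd (fun y => f y * pd g i y) i x := by
    have h2 := fderiv_fun_add (dA x) (dB x)
    simp only [pd] at h2 ⊢
    rw [h2, ContinuousLinearMap.add_apply]
  rw [this, pd_mul (hf1.differentiable one_ne_zero) hgd i x,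
    pd_mul hfd (hg1.differentiable one_ne_zero) i x]
  ring

lemma laplacian_mul {f g : EuclideanSpace ℝ (Fin d) → ℝ}
    (hf : ContDiff ℝ 2 f) (hg : ContDiff ℝ 2 g) (x : EuclideanSpace ℝ (Fin d)) :
    laplacian (fun y => f y * g y) x
      = laplacian f x * g x + 2 * ∑ i, pd f i x * pd g i x + f x * laplacian g x := by
  simp only [laplacian_eq]
  rw [Finset.sum_congr rfl (fun i _ => pd_pd_mul hf hg i x)]
  rw [Finset.sum_add_distrib, Finset.sum_add_distrib, ← Finset.sum_mul, ← Finset.mul_sum,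
    ← Finset.mul_sum]

lemma inner_gradient (f g : EuclideanSpace ℝ (Fin d) → ℝ) (x : EuclideanSpace ℝ (Fin d)) :
    (inner ℝ (gradient f x) (gradient g x) : ℝ) = ∑ i, pd f i x * pd g i x := by
  have hcoord : ∀ (h : EuclideanSpace ℝ (Fin d) → ℝ) (i : Fin d),
      (gradient h x) i = pd h i x := by
    intro h i
    have h1 : (inner ℝ (gradient h x) (EuclideanSpace.single i (1 : ℝ)) : ℝ)
        = fderiv ℝ h x (EuclideanSpace.single i (1 : ℝ)) :=
      InnerProductSpace.toDual_symm_apply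
    rw [real_inner_comm, EuclideanSpace.inner_single_left] at h1
    simpa [pd] using h1
  rw [PiLp.inner_apply]
  exact Finset.sum_congr rfl fun i _ => by
    simp [RCLike.inner_apply, hcoord, mul_comm]

end CutoffAux

open CutoffAux

/-- **Cutoff energy inequality.** If `V : ℝ^d → ℝ` is bounded, nonnegative and continuous,
`u` is a `C²` solution of `Δu = V u` on `ℝ^d`, and `χ` is a smooth compactly supported cutoff
with `0 ≤ χ ≤ 1`, then with `v = χ u` one has
`∫ V v² ≤ -∫ (Δχ) u v - 2 ∫ (∇χ · ∇u) v`. -/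
theorem cutoff_energy_inequality
    (d : ℕ) (hd : 1 ≤ d)
    (V : EuclideanSpace ℝ (Fin d) → ℝ)
    (hVcont : Continuous V)
    (hVbdd : ∃ M : ℝ, ∀ x, |V x| ≤ M)
    (hVnonneg : ∀ x, 0 ≤ V x)
    (u : EuclideanSpace ℝ (Fin d) → ℝ)
    (hu : ContDiff ℝ 2 u)
    (hsol : ∀ x, laplacian u x = V x * u x)
    (χ : EuclideanSpace ℝ (Fin d) → ℝ)
    (hχsmooth : ContDiff ℝ (⊤ : ℕ∞) χ)
    (hχcompact : HasCompactSupport χ)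
    (hχle : ∀ x, 0 ≤ χ x ∧ χ x ≤ 1) :
    ∫ x : EuclideanSpace ℝ (Fin d), V x * (χ x * u x) ^ 2
      ≤ -(∫ x : EuclideanSpace ℝ (Fin d), laplacian χ x * u x * (χ x * u x))
        - 2 * ∫ x : EuclideanSpace ℝ (Fin d),
            (inner ℝ (gradient χ x) (gradient u x) : ℝ) * (χ x * u x) := by
  
  classical
  have hχ2 : ContDiff ℝ 2 χ := hχsmooth.of_le (WithTop.coe_le_coe.mpr le_top)
  set w : EuclideanSpace ℝ (Fin d) → ℝ := fun x => χ x * u x with hwdef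
  have hw2 : ContDiff ℝ 2 w := hχ2.mul hu
  have hwc : HasCompactSupport w := hχcompact.mul_right
  have hwcont : Continuous w := hw2.continuous
  have hwdiff : Differentiable ℝ w := hw2.differentiable two_ne_zero
  have hpdw : ∀ i, ContDiff ℝ 1 (pd w i) := fun i => contDiff_pd hw2 (by norm_num) i
  have hpdwc : ∀ i, HasCompactSupport (pd w i) := fun i => hcs_pd hwc i
  have hpdwcont : ∀ i, Continuous (pd w i) := fun i => (hpdw i).continuous
  have hpd2cont : ∀ i, Continuous (pd (pd w i) i) := fun i =>
    continuous_pd (hpdw i) le_rfl i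
  -- integrability of the second-order terms
  have int1 : ∀ i, Integrable (fun x => w x * pd (pd w i) i x) :=
    fun i => (hwcont.mul (hpd2cont i)).integrable_of_hasCompactSupport hwc.mul_right
  have int2 : ∀ i, Integrable (fun x => pd w i x * pd w i x) :=
    fun i => ((hpdwcont i).mul (hpdwcont i)).integrable_of_hasCompactSupport
      (hpdwc i).mul_right
  have int3 : ∀ i, Integrable (fun x => w x * pd w i x) :=
    fun i => (hwcont.mul (hpdwcont i)).integrable_of_hasCompactSupport hwc.mul_right
  -- integration by parts in each direction
  have key : ∀ i : Fin d, ∫ x, w x * pd (pd w i) i x = - ∫ x, pd w i x * pd w i x := by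
    intro i
    have := integral_mul_fderiv_eq_neg_fderiv_mul_of_integrable
      (f := w) (g := pd w i) (v := EuclideanSpace.single i (1 : ℝ)) (μ := volume)
      (int2 i) (int1 i) (int3 i) (fun x _ => hwdiff x) (fun x _ => (hpdw i).differentiable one_ne_zero x)
    exact this
  have ineg : ∫ x, w x * laplacian w x ≤ 0 := by
    have hsum : ∫ x, w x * laplacian w x = ∑ i, ∫ x, w x * pd (pd w i) i x := by
      simp only [laplacian_eq, Finset.mul_sum]
      exact integral_finset_sum _ (fun i _ => int1 i)
    rw [hsum]
    apply Finset.sum_nonpos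
    intro i _
    rw [key i]
    simp only [neg_nonpos]
    exact integral_nonneg fun x => mul_self_nonneg _
  -- pointwise expansion of w * Δw
  have hpt : ∀ x, w x * laplacian w x
      = laplacian χ x * u x * w x + 2 * ((∑ i, pd χ i x * pd u i x) * w x)
        + V x * w x ^ 2 := by
    intro x
    have : laplacian w x = laplacian χ x * u x + 2 * ∑ i, pd χ i x * pd u i x
        + χ x * laplacian u x := laplacian_mul hχ2 hu x
    rw [hwdef]
    simp only []
    rw [this, hsol x]
    ring
  -- integrability of the three pieces
  have hlapχcont : Continuous (laplacian χ) := by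
    apply continuous_finset_sum
    intro i _
    exact continuous_pd (contDiff_pd (m := 1) hχsmooth (by norm_cast) i) le_rfl i
  have iA : Integrable (fun x => laplacian χ x * u x * w x) :=
    (((hlapχcont.mul hu.continuous)).mul hwcont).integrable_of_hasCompactSupport
      hwc.mul_left
  have hBcont : Continuous (fun x => (∑ i, pd χ i x * pd u i x)) := by
    apply continuous_finset_sum
    intro i _
    exact (continuous_pd hχsmooth (by simp) i).mul (continuous_pd hu one_le_two i)
  have iB : Integrable (fun x => (∑ i, pd χ i x * pd u i x) * w x) :=
    (hBcont.mul hwcont).integrable_of_hasCompactSupport hwc.mul_left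
  have iC : Integrable (fun x => V x * w x ^ 2) := by
    apply (hVcont.mul (hwcont.pow 2)).integrable_of_hasCompactSupport
    have hw2s : HasCompactSupport (fun x => w x ^ 2) := by
      apply hwc.mono
      intro x hx
      simp only [Function.mem_support] at hx ⊢
      exact fun h => hx (by rw [h]; norm_num)
    exact hw2s.mul_left
  have hsplit : ∫ x, w x * laplacian w x
      = (∫ x, laplacian χ x * u x * w x)
        + 2 * (∫ x, (∑ i, pd χ i x * pd u i x) * w x)
        + ∫ x, V x * w x ^ 2 := by
    rw [show (fun x => w x * laplacian w x)
        = fun x => laplacian χ x * u x * w x + 2 * ((∑ i, pd χ i x * pd u i x) * w x)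
          + V x * w x ^ 2 from funext hpt]
    have iAB : Integrable (fun x : EuclideanSpace ℝ (Fin d) =>
        laplacian χ x * u x * w x + 2 * ((∑ i, pd χ i x * pd u i x) * w x)) volume :=
      iA.add (iB.const_mul 2)
    rw [integral_add iAB iC, integral_add iA (iB.const_mul 2), MeasureTheory.integral_const_mul 2 _]
  -- rewrite the gradient integral
  have hgradeq : ∫ x, (inner ℝ (gradient χ x) (gradient u x) : ℝ) * w x
      = ∫ x, (∑ i, pd χ i x * pd u i x) * w x := by
    congr 1
    funext x
    rw [inner_gradient]
  rw [hgradeq]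
  have := hsplit ▸ ineg
  linarith
end
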